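/- arXiv:2303.03289 — 3 statements merged into one kernel-verified Lean document; each statement's English description precedes it below -/
import Mathlib

section
/- Let R be a nontrivial commutative unitary ring with only finitely many ideals, and let α be the number of maximal ideals of R. Then there exist positive integers β₁, …, β_α, each at least 2, such that the total number of ideals of R equals the product β₁ · β₂ ⋯ β_α. -/
open Ideal

/-- A ring equivalence induces an equivalence of ideal lattices, hence equal cardinalities. -/
lemma aux_card_ideal_congr {A B : Type*} [CommRing A] [CommRing B] (e : A ≃+* B) :
    Nat.card (Ideal A) = Nat.card (Ideal B) :=
  Nat.card_congr
    { toFun := fun I => I.map (e : A →+* B)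
      invFun := fun J => J.map (e.symm : B →+* A)
      left_inv := fun I => Ideal.map_of_equiv e
      right_inv := fun J => by
        simpa using Ideal.map_of_equiv (I := J) e.symm }

/-- The infimum of pairwise coprime ideals over a finset equals their product. -/
lemma aux_inf_eq_prod {R : Type*} [CommRing R] {ι : Type*} [DecidableEq ι]
    (s : Finset ι) (f : ι → Ideal R) (h : Set.Pairwise ↑s (Function.onFun IsCoprime f)) :
    s.inf f = ∏ i ∈ s, f i := by
  induction s using Finset.cons_induction with
  | empty => simp
  | cons a s ha ih =>
    have hsub : (↑s : Set ι) ⊆ ↑(Finset.cons a s ha) := Finset.coe_subset.2 (Finset.subset_cons _)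
    have hcop : IsCoprime (f a) (s.inf f) := by
      rw [Finset.inf_eq_iInf]
      exact Ideal.isCoprime_biInf fun j hj =>
        h (Finset.mem_coe.2 (Finset.mem_cons_self a s))
          (Finset.mem_coe.2 (Finset.mem_cons_of_mem hj))
          (by rintro rfl; exact ha hj)
    rw [Finset.inf_cons, Finset.prod_cons, ← ih (h.mono hsub),
      inf_eq_mul_of_isCoprime hcop]

/-- The dependent `Fin`-successor ring equivalence. -/
def auxPiFinSucc (n : ℕ) (S : Fin (n + 1) → Type*) [∀ i, CommRing (S i)] :
    (∀ i, S i) ≃+* S 0 × ∀ i : Fin n, S i.succ where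
  toFun f := (f 0, fun i => f i.succ)
  invFun p := Fin.cons p.1 p.2
  left_inv f := Fin.cons_self_tail f
  right_inv p := by simp
  map_mul' _ _ := rfl
  map_add' _ _ := rfl

universe u

/-- Cardinality of ideals of a finite product of rings, `Fin` version. -/
lemma aux_card_ideal_pi_fin : ∀ (n : ℕ) (S : Fin n → Type u) [∀ i, CommRing (S i)],
    Nat.card (Ideal (∀ i, S i)) = ∏ i, Nat.card (Ideal (S i)) := by
  intro n
  induction n with
  | zero =>
    intro S _
    haveI : Subsingleton (∀ i : Fin 0, S i) := ⟨fun a b => funext fun i => i.elim0⟩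
    have hsub : Subsingleton (Ideal (∀ i : Fin 0, S i)) := by
      constructor
      intro I J
      ext x
      have hx : x = 0 := Subsingleton.elim _ _
      subst hx
      simp
    rw [Finset.univ_eq_empty, Finset.prod_empty]
    exact Nat.card_eq_one_iff_unique.mpr ⟨hsub, ⟨⊥⟩⟩
  | succ n ih =>
    intro S _
    calc Nat.card (Ideal (∀ i, S i))
        = Nat.card (Ideal (S 0 × ∀ i : Fin n, S i.succ)) :=
          aux_card_ideal_congr (auxPiFinSucc n S)
      _ = Nat.card (Ideal (S 0) × Ideal (∀ i : Fin n, S i.succ)) :=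
          Nat.card_congr Ideal.idealProdEquiv.toEquiv
      _ = Nat.card (Ideal (S 0)) * Nat.card (Ideal (∀ i : Fin n, S i.succ)) :=
          Nat.card_prod _ _
      _ = Nat.card (Ideal (S 0)) * ∏ i : Fin n, Nat.card (Ideal (S i.succ)) := by
          rw [ih]
      _ = ∏ i : Fin (n + 1), Nat.card (Ideal (S i)) := (Fin.prod_univ_succ (fun i => Nat.card (Ideal (S i)))).symm

/-- Cardinality of ideals of a finite product of rings. -/
lemma aux_card_ideal_pi {ι : Type*} [Fintype ι] (S : ι → Type u) [∀ i, CommRing (S i)] :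
    Nat.card (Ideal (∀ i, S i)) = ∏ i, Nat.card (Ideal (S i)) := by
  let e := Fintype.equivFin ι
  calc Nat.card (Ideal (∀ i, S i))
      = Nat.card (Ideal (∀ j : Fin (Fintype.card ι), S (e.symm j))) :=
        (aux_card_ideal_congr (RingEquiv.piCongrLeft S e.symm)).symm
    _ = ∏ j : Fin (Fintype.card ι), Nat.card (Ideal (S (e.symm j))) :=
        aux_card_ideal_pi_fin _ _
    _ = ∏ i, Nat.card (Ideal (S i)) := Equiv.prod_comp e.symm (fun i => Nat.card (Ideal (S i)))

/-- Let `R` be a nontrivial commutative unitary ring with finitely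
many ideals, and let `α` be the number of maximal ideals of `R`. Then there exist
integers `β₁, …, β_α ≥ 2` whose product is the total number of ideals of `R`. -/
theorem card_ideals_eq_prod {R : Type*} [CommRing R] [Nontrivial R]
    (h : Finite (Ideal R)) :
    ∃ β : Fin (Nat.card {M : Ideal R // M.IsMaximal}) → ℕ,
      (∀ i, 2 ≤ β i) ∧ Nat.card (Ideal R) = ∏ i, β i := by
  classical
  haveI := h
  haveI : Finite (Submodule R R) := h
  haveI : IsArtinianRing R := inferInstance
  haveI : Finite {M : Ideal R // M.IsMaximal} := Subtype.finite
  cases nonempty_fintype {M : Ideal R // M.IsMaximal}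
  obtain ⟨k, hk⟩ := IsArtinianRing.isNilpotent_jacobson_bot (R := R)
  have hk0 : k ≠ 0 := by
    rintro rfl
    rw [pow_zero] at hk
    have h1 : (1 : R) ∈ (⊥ : Ideal R) := by
      rw [← Ideal.zero_eq_bot, ← hk, Ideal.one_eq_top]
      exact Submodule.mem_top
    exact one_ne_zero (Ideal.mem_bot.mp h1)
  have hpair : Pairwise (Function.onFun IsCoprime fun M : {M : Ideal R // M.IsMaximal} => M.1 ^ k) :=
    fun M N hMN =>
      (Ideal.isCoprime_iff_sup_eq.mpr (Ideal.IsMaximal.coprime_of_ne M.2 N.2 (fun hc => hMN (Subtype.ext hc)))).pow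
  have hinf : (⨅ M : {M : Ideal R // M.IsMaximal}, M.1 ^ k) = ⊥ := by
    refine le_antisymm ?_ bot_le
    have h1 : (⨅ M : {M : Ideal R // M.IsMaximal}, M.1 ^ k)
        = ∏ M : {M : Ideal R // M.IsMaximal}, M.1 ^ k := by
      rw [← Finset.inf_univ_eq_iInf,
        aux_inf_eq_prod _ _ (by rw [Finset.coe_univ]; exact hpair.set_pairwise _)]
    have h3 : (∏ M : {M : Ideal R // M.IsMaximal}, M.1)
        ≤ ⨅ M : {M : Ideal R // M.IsMaximal}, M.1 := by
      rw [← Finset.inf_univ_eq_iInf]; exact Ideal.prod_le_inf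
    have h4 : (⨅ M : {M : Ideal R // M.IsMaximal}, M.1)
        = Ideal.jacobson (⊥ : Ideal R) := by
      have hset : {J : Ideal R | ⊥ ≤ J ∧ J.IsMaximal} = {J : Ideal R | J.IsMaximal} := by
        ext J; simp
      rw [Ideal.jacobson, hset, sInf_eq_iInf']
      rfl
    calc (⨅ M : {M : Ideal R // M.IsMaximal}, M.1 ^ k)
        = (∏ M : {M : Ideal R // M.IsMaximal}, M.1) ^ k := by rw [h1, Finset.prod_pow]
      _ ≤ (⨅ M : {M : Ideal R // M.IsMaximal}, M.1) ^ k := Ideal.pow_right_mono h3 k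
      _ = ⊥ := by rw [h4]; exact hk
  let e : R ≃+* ∀ M : {M : Ideal R // M.IsMaximal}, R ⧸ (M.1 ^ k) :=
    ((RingEquiv.quotientBot R).symm.trans (Ideal.quotEquivOfEq hinf.symm)).trans
      (Ideal.quotientInfRingEquivPiQuotient _ hpair)
  have hcardR : Nat.card (Ideal R)
      = ∏ M : {M : Ideal R // M.IsMaximal}, Nat.card (Ideal (R ⧸ M.1 ^ k)) := by
    rw [aux_card_ideal_congr e]
    exact aux_card_ideal_pi _
  have h2le : ∀ M : {M : Ideal R // M.IsMaximal},
      2 ≤ Nat.card (Ideal (R ⧸ M.1 ^ k)) := by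
    intro M
    haveI : Finite (Ideal (R ⧸ M.1 ^ k)) :=
      Finite.of_injective (fun J => Ideal.comap (Ideal.Quotient.mk (M.1 ^ k)) J)
        (Ideal.comap_injective_of_surjective _ Ideal.Quotient.mk_surjective)
    haveI : Nontrivial (R ⧸ M.1 ^ k) :=
      Ideal.Quotient.nontrivial_iff.mpr
        (fun hT => M.2.ne_top (top_le_iff.mp (hT ▸ Ideal.pow_le_self hk0)))
    haveI : Nontrivial (Ideal (R ⧸ M.1 ^ k)) := by
      refine ⟨⊥, ⊤, fun hbt => ?_⟩
      have h1 : (1 : R ⧸ M.1 ^ k) ∈ (⊥ : Ideal (R ⧸ M.1 ^ k)) := by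
        rw [hbt]; exact Submodule.mem_top
      exact one_ne_zero (Ideal.mem_bot.mp h1)
    exact Finite.one_lt_card
  let e2 : {M : Ideal R // M.IsMaximal} ≃ Fin (Nat.card {M : Ideal R // M.IsMaximal}) :=
    Finite.equivFin _
  refine ⟨fun i => Nat.card (Ideal (R ⧸ (e2.symm i).1 ^ k)), fun i => h2le _, ?_⟩
  rw [hcardR]
  exact (Equiv.prod_comp e2.symm
    (fun M => Nat.card (Ideal (R ⧸ M.1 ^ k)))).symm
end

section
/- Let R be a commutative unitary ring which has exactly three ideals {0}, I, R (pairwise distinct). Then the annihilator of I equals I, i.e., ({0} : I) = {x ∈ R : x·I ⊆ {0}} = I. -/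
/-- If a commutative unitary ring `R` has exactly three ideals
`{0}, I, R` (pairwise distinct), then the annihilator of `I` equals `I`:
`{x ∈ R : x·I ⊆ {0}} = I`. -/
theorem annihilator_eq_self_of_three_ideals {R : Type*} [CommRing R] (I : Ideal R)
    (hbI : (⊥ : Ideal R) ≠ I) (hIT : I ≠ ⊤) (hbT : (⊥ : Ideal R) ≠ ⊤)
    (h : ∀ J : Ideal R, J = ⊥ ∨ J = I ∨ J = ⊤) :
    {x : R | ∀ y ∈ I, x * y = 0} = (I : Set R) := by
  -- Step 1: I * I = ⊥
  have hsq : I * I = ⊥ := by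
    rcases h (I * I) with h0 | hi | ht
    · exact h0
    · exfalso
      obtain ⟨a, haI, ha0⟩ := Submodule.exists_mem_ne_zero_of_ne_bot hbI.symm
      have hle : Ideal.span {a} ≤ I := Ideal.span_le.mpr (Set.singleton_subset_iff.mpr haI)
      have hspan : Ideal.span {a} = I := by
        rcases h (Ideal.span {a}) with h0' | hi' | ht'
        · exact absurd ((Ideal.span_singleton_eq_bot).mp h0') ha0
        · exact hi'
        · exact absurd (top_le_iff.mp (ht' ▸ hle)) hIT
      have hamem : a ∈ Ideal.span {a * a} := by
        have : I * I = Ideal.span {a * a} := by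
          rw [← hspan, Ideal.span_singleton_mul_span_singleton]
        rw [← this, hi]; exact haI
      obtain ⟨r, hr⟩ := Ideal.mem_span_singleton'.mp hamem
      -- hr : r * (a * a) = a
      have hae : a * (a * r) = a := by
        calc a * (a * r) = r * (a * a) := by ring
        _ = a := hr
      have heI : a * r ∈ I := I.mul_mem_right r haI
      rcases h (Ideal.span {1 - a * r}) with h0' | hi' | ht'
      · have : (1 : R) - a * r = 0 := Ideal.span_singleton_eq_bot.mp h0'
        have h1 : (1 : R) ∈ I := by
          have : (1 : R) = a * r := by linear_combination this
          rw [this]; exact heI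
        exact hIT (Ideal.eq_top_iff_one I |>.mpr h1)
      · have hmem : (1 : R) - a * r ∈ I := hi' ▸ Ideal.mem_span_singleton_self _
        have h1 : (1 : R) ∈ I := by
          have := I.add_mem hmem heI
          simpa using this
        exact hIT (Ideal.eq_top_iff_one I |>.mpr h1)
      · have h1 : (1 : R) ∈ Ideal.span {1 - a * r} := ht' ▸ Submodule.mem_top
        obtain ⟨s, hs⟩ := Ideal.mem_span_singleton'.mp h1
        -- hs : s * (1 - a * r) = 1
        have : a = 0 := by
          calc a = a * (s * (1 - a * r)) := by rw [hs, mul_one]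
          _ = s * (a - a * (a * r)) := by ring
          _ = s * (a - a) := by rw [hae]
          _ = 0 := by ring
        exact ha0 this
    · exact absurd (top_le_iff.mp (ht ▸ Ideal.mul_le_left)) hIT
  -- Step 2: the colon ideal equals I
  have hKI : (⊥ : Ideal R).colon I = I := by
    have hIK : I ≤ (⊥ : Ideal R).colon I := by
      intro x hx
      rw [Submodule.mem_colon]
      intro y hy
      have : x * y ∈ I * I := Ideal.mul_mem_mul hx hy
      rw [hsq] at this
      simpa using this
    rcases h ((⊥ : Ideal R).colon I) with h0 | hi | ht
    · exact absurd (le_bot_iff.mp (h0 ▸ hIK)).symm hbI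
    · exact hi
    · exfalso
      have h1 : (1 : R) ∈ (⊥ : Ideal R).colon I := ht ▸ Submodule.mem_top
      rw [Submodule.mem_colon] at h1
      apply hbI
      refine le_antisymm bot_le fun y hy => ?_
      have := h1 y hy
      simpa using this
  ext x
  simp only [Set.mem_setOf_eq, SetLike.mem_coe]
  constructor
  · intro hx
    have : x ∈ (⊥ : Ideal R).colon I := by
      rw [Submodule.mem_colon]
      intro y hy
      simpa using hx y hy
    rwa [hKI] at this
  · intro hx y hy
    have : x ∈ (⊥ : Ideal R).colon I := hKI.symm ▸ hx
    rw [Submodule.mem_colon] at this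
    simpa using this y hy
end

section
/- Let R be a commutative unitary ring which has exactly four ideals {0}, I, J, R (pairwise distinct), where I and J are incomparable (neither I ⊆ J nor J ⊆ I). Then I + J = R, I ⊗ J = I ∩ J = {0}, I² = I, J² = J, Ann(I) = J and Ann(J) = I. -/
/-- Let `R` have exactly four ideals `{0}, I, J, R` (pairwise distinct),
with `I` and `J` incomparable. Then `I + J = R`, `I ⊗ J = I ∩ J = {0}`, `I² = I`,
`J² = J`, `Ann(I) = J` and `Ann(J) = I`. -/
theorem four_ideals_incomparable {R : Type*} [CommRing R] (I J : Ideal R)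
    (hbI : (⊥ : Ideal R) ≠ I) (hbJ : (⊥ : Ideal R) ≠ J) (hbT : (⊥ : Ideal R) ≠ ⊤)
    (hIJ : I ≠ J) (hIT : I ≠ ⊤) (hJT : J ≠ ⊤)
    (h : ∀ K : Ideal R, K = ⊥ ∨ K = I ∨ K = J ∨ K = ⊤)
    (hnc₁ : ¬ I ≤ J) (hnc₂ : ¬ J ≤ I) :
    I + J = ⊤ ∧ I * J = I ⊓ J ∧ I * J = ⊥ ∧ I * I = I ∧ J * J = J ∧
      {x : R | ∀ y ∈ I, x * y = 0} = (J : Set R) ∧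
      {x : R | ∀ y ∈ J, x * y = 0} = (I : Set R) := by
  have hsum : I + J = ⊤ := by
    rcases h (I + J) with hk | hk | hk | hk
    · exact absurd (le_bot_iff.mp (hk ▸ le_sup_left : I ≤ ⊥)) (Ne.symm hbI)
    · exact absurd (hk ▸ le_sup_right : J ≤ I) hnc₂
    · exact absurd (hk ▸ le_sup_left : I ≤ J) hnc₁
    · exact hk
  have hinf : I ⊓ J = ⊥ := by
    rcases h (I ⊓ J) with hk | hk | hk | hk
    · exact hk
    · exact absurd (hk ▸ inf_le_right : I ≤ J) hnc₁
    · exact absurd (hk ▸ inf_le_left : J ≤ I) hnc₂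
    · exact absurd (top_le_iff.mp (hk ▸ inf_le_left : ⊤ ≤ I)) hIT
  have hprod : I * J = ⊥ := le_bot_iff.mp (hinf ▸ Ideal.mul_le_inf)
  have hsq : ∀ K L : Ideal R, (∀ M : Ideal R, M = ⊥ ∨ M = K ∨ M = L ∨ M = ⊤) →
      K + L = ⊤ → K * L = ⊥ → (⊥ : Ideal R) ≠ K →
      ¬ L ≤ K → K ≠ ⊤ → K * K = K := by
    intro K L h' hs hp hbK hLK hKT
    rcases h' (K * K) with hk | hk | hk | hk
    · exfalso
      have : K = ⊥ := by
        calc K = K * ⊤ := (Ideal.mul_top K).symm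
        _ = K * (K + L) := by rw [hs]
        _ = K * K + K * L := mul_add K K L
        _ = ⊥ := by rw [hk, hp]; simp
      exact hbK this.symm
    · exact hk
    · exfalso
      have hle : K * K ≤ K := Ideal.mul_le_left
      rw [hk] at hle
      exact hLK hle
    · exfalso
      have hle : K * K ≤ K := Ideal.mul_le_left
      rw [hk] at hle
      exact hKT (top_le_iff.mp hle)
  have hII : I * I = I := hsq I J h hsum hprod hbI hnc₂ hIT
  have hJJ : J * J = J := hsq J I (fun M => by rcases h M with hk|hk|hk|hk <;> tauto) (by rw [add_comm, hsum]) (by rw [mul_comm, hprod]) hbJ hnc₁ hJT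
  have hann : ∀ K L : Ideal R, (∀ M : Ideal R, M = ⊥ ∨ M = K ∨ M = L ∨ M = ⊤) →
      K * L = ⊥ → (⊥ : Ideal R) ≠ K → (⊥ : Ideal R) ≠ L →
      ¬ L ≤ K → K ≠ L → {x : R | ∀ y ∈ K, x * y = 0} = (L : Set R) := by
    intro K L h' hp hbK hbL hLK hKL'
    have hKA : Submodule.annihilator (K : Submodule R R) = L := by
      have hLle : L ≤ Submodule.annihilator (K : Submodule R R) := by
        intro x hx
        rw [Submodule.mem_annihilator]
        intro n hn
        have : x * n ∈ K * L := by
          have h2 := Ideal.mul_mem_mul hx hn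
          rwa [mul_comm L K] at h2
        rw [hp] at this
        simpa using this
      rcases h' (Submodule.annihilator (K : Submodule R R)) with hk | hk | hk | hk
      · exact absurd (le_bot_iff.mp (hk ▸ hLle)) (Ne.symm hbL)
      · exact absurd (hk ▸ hLle) hLK
      · exact hk
      · exfalso
        have h1 : (1 : R) ∈ Submodule.annihilator (K : Submodule R R) := hk ▸ trivial
        rw [Submodule.mem_annihilator] at h1
        have : K = ⊥ := by
          apply le_bot_iff.mp
          intro x hx
          have := h1 x hx
          simpa using this
        exact hbK this.symm
    ext x
    constructor
    · intro hx
      rw [← hKA, SetLike.mem_coe, Submodule.mem_annihilator]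
      intro n hn
      simpa using hx n hn
    · intro hx y hy
      rw [← hKA, SetLike.mem_coe, Submodule.mem_annihilator] at hx
      simpa using hx y hy
  refine ⟨hsum, hprod.trans hinf.symm, hprod, hII, hJJ, ?_, ?_⟩
  · exact hann I J h hprod hbI hbJ hnc₂ hIJ
  · exact hann J I (fun M => by rcases h M with hk|hk|hk|hk <;> tauto) (by rw [mul_comm, hprod]) hbJ hbI hnc₁ hIJ.symm
end
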